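/- arXiv:1505.06940 — 6 statements merged into one kernel-verified Lean document; each statement's English description precedes it below -/
import Mathlib

section
/- Let F be a finite field with q elements and let n, m be natural numbers. Then the number of m-dimensional F-linear subspaces V of F^{n+m} satisfies (number of such V) · ∏_{i=0}^{m-1} (q^m − q^i) = ∏_{i=0}^{m-1} (q^{n+m} − q^i). Equivalently, the number of m-dimensional subspaces of F^{n+m} equals the Gaussian binomial coefficient [n+m choose m]_q. -/
open Submodule Set

section aux

variable {F : Type*} [Field F] [Fintype F] {E : Type*} [AddCommGroup E] [Module F E]
  [FiniteDimensional F E]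

/-- Fiberwise equivalence: independent tuples with span `V` correspond to
independent tuples in `V`. -/
noncomputable def fiberEquiv (m : ℕ) (V : Submodule F E) (hV : Module.finrank F V = m) :
    {p : {s : Fin m → E // LinearIndependent F s} // Submodule.span F (Set.range p.1) = V} ≃
    {t : Fin m → V // LinearIndependent F t} where
  toFun p := ⟨fun i => ⟨p.1.1 i, by
      have h := Submodule.subset_span (R := F) (Set.mem_range_self (f := p.1.1) i)
      rw [p.2] at h; exact h⟩, by
    apply LinearIndependent.of_comp V.subtype
    exact p.1.2⟩
  invFun t := ⟨⟨fun i => (t.1 i : E), t.2.map' V.subtype (Submodule.ker_subtype V)⟩, by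
    have htop : Submodule.span F (Set.range t.1) = ⊤ :=
      t.2.span_eq_top_of_card_eq_finrank' (by simp [hV])
    have : Set.range (fun i => (t.1 i : E)) = V.subtype '' Set.range t.1 := by
      ext x; simp [Set.range_comp]
    rw [this, ← Submodule.map_span, htop, Submodule.map_top, Submodule.range_subtype]⟩
  left_inv p := by ext i; rfl
  right_inv t := by ext i; rfl

end aux

/-- The number of `m`-dimensional subspaces of `F^{n+m}` over a finite field `F`
with `q` elements satisfies
`(number of such V) · ∏_{i<m} (q^m − q^i) = ∏_{i<m} (q^{n+m} − q^i)`,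
i.e. it equals the Gaussian binomial coefficient `[n+m choose m]_q`. -/
theorem card_grassmannian (F : Type*) [Field F] [Fintype F] (q n m : ℕ)
    (hq : Fintype.card F = q) :
    Nat.card {V : Submodule F (Fin (n + m) → F) // Module.finrank F V = m} *
        ∏ i ∈ Finset.range m, (q ^ m - q ^ i)
      = ∏ i ∈ Finset.range m, (q ^ (n + m) - q ^ i) := by
  subst hq
  set E := Fin (n + m) → F
  set X := {s : Fin m → E // LinearIndependent F s}
  -- total count of independent m-tuples
  have htotal : Nat.card X = ∏ i ∈ Finset.range m, (Fintype.card F ^ (n + m) -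
      Fintype.card F ^ i) := by
    have := card_linearIndependent (K := F) (V := E) (k := m)
      (by simp [E, Module.finrank_fintype_fun_eq_card])
    rw [this]
    simp only [E, Module.finrank_fintype_fun_eq_card, Fintype.card_fin]
    exact Fin.prod_univ_eq_prod_range
      (fun i => Fintype.card F ^ (n + m) - Fintype.card F ^ i) m
  -- fiber the independent tuples over their span
  set f : X → {V : Submodule F E // Module.finrank F V = m} :=
    fun s => ⟨Submodule.span F (Set.range s.1), by
      rw [finrank_span_eq_card s.2, Fintype.card_fin]⟩
  have hfiber : ∀ V : {V : Submodule F E // Module.finrank F V = m},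
      Nat.card {s : X // f s = V} =
        ∏ i ∈ Finset.range m, (Fintype.card F ^ m - Fintype.card F ^ i) := by
    rintro ⟨V, hV⟩
    have e1 : {s : X // f s = ⟨V, hV⟩} ≃
        {p : X // Submodule.span F (Set.range p.1) = V} :=
      Equiv.subtypeEquivRight (fun s => by simp [f, Subtype.ext_iff])
    have e2 := fiberEquiv (F := F) (E := E) m V hV
    rw [Nat.card_congr (e1.trans e2)]
    have := card_linearIndependent (K := F) (V := V) (k := m) (le_of_eq hV.symm)
    rw [this, hV]
    exact Fin.prod_univ_eq_prod_range
      (fun i => Fintype.card F ^ m - Fintype.card F ^ i) m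
  have hsigma : Nat.card X =
      Nat.card {V : Submodule F E // Module.finrank F V = m} *
        ∏ i ∈ Finset.range m, (Fintype.card F ^ m - Fintype.card F ^ i) := by
    classical
    rw [Nat.card_congr (Equiv.sigmaFiberEquiv f).symm, Nat.card_eq_fintype_card,
      Fintype.card_sigma]
    simp only [← Nat.card_eq_fintype_card, hfiber]
    rw [Finset.sum_const, smul_eq_mul, Finset.card_univ]
    congr 1
    exact (Nat.card_eq_fintype_card).symm
  rw [← hsigma, htotal]
end

section
/- Let λ and μ be partitions and suppose there exists an ℕ-by-ℕ matrix A with entries in {0,1} and finite support whose j-th column sum is λ'_j for every j and whose i-th row sum is μ_i for every i, where λ' is the conjugate partition of λ. Then |μ| = |λ| and μ ≤ λ in the dominance order, i.e. for every k, μ_1 + … + μ_k ≤ λ_1 + … + λ_k. -/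
/-- A partition: a weakly decreasing sequence of natural numbers with
finitely many nonzero terms.  The part `λ_{i+1}` is `f i`. -/
structure NatPartition where
  f : ℕ → ℕ
  antitone : ∀ ⦃i j : ℕ⦄, i ≤ j → f j ≤ f i
  finite_support : (Function.support f).Finite

/-- The size `|λ|` of a partition: the sum of its parts. -/
noncomputable def NatPartition.size (l : NatPartition) : ℕ := ∑ᶠ i, l.f i

/-- The conjugate partition: `λ'_{j+1} = #{i : λ_{i+1} ≥ j+1}`. -/
noncomputable def NatPartition.conj (l : NatPartition) (j : ℕ) : ℕ :=
  Nat.card {i : ℕ // j + 1 ≤ l.f i}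

lemma natpart_conj_iff (l : NatPartition) (j i : ℕ) :
    j + 1 ≤ l.f i ↔ i < l.conj j := by
  classical
  have hs : {i : ℕ | j + 1 ≤ l.f i}.Finite :=
    l.finite_support.subset (by
      intro i hi
      simp only [Set.mem_setOf_eq] at hi
      simp only [Function.mem_support]
      omega)
  have hcard : l.conj j = hs.toFinset.card := by
    rw [NatPartition.conj]
    have : {i : ℕ // j + 1 ≤ l.f i} = {i : ℕ | j + 1 ≤ l.f i} := rfl
    rw [this, Nat.card_coe_set_eq, Set.ncard_eq_toFinset_card _ hs]
  have hdc : ∀ a b : ℕ, a ≤ b → b ∈ hs.toFinset → a ∈ hs.toFinset := by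
    intro a b hab hb
    simp only [Set.Finite.mem_toFinset, Set.mem_setOf_eq] at hb ⊢
    exact hb.trans (l.antitone hab)
  have key : ∀ i, i ∈ hs.toFinset ↔ i < hs.toFinset.card := by
    intro i
    constructor
    · intro hi
      by_contra h
      push_neg at h
      have hsub : Finset.range (i + 1) ⊆ hs.toFinset := by
        intro a ha
        simp only [Finset.mem_range] at ha
        exact hdc a i (by omega) hi
      have := Finset.card_le_card hsub
      simp only [Finset.card_range] at this
      omega
    · intro hi
      by_contra h
      have hsub : hs.toFinset ⊆ Finset.range i := by
        intro a ha
        simp only [Finset.mem_range]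
        by_contra hai
        exact h (hdc i a (by omega) ha)
      have := Finset.card_le_card hsub
      simp only [Finset.card_range] at this
      omega
  rw [hcard, ← key]
  simp [Set.Finite.mem_toFinset]

/-- If there is an `ℕ×ℕ` matrix `A` with entries in `{0,1}` and finite support
whose column sums are the conjugate partition `λ'` and whose row sums are `μ`,
then `|μ| = |λ|` and `μ ≤ λ` in the dominance order. -/
theorem dominance_of_zero_one_matrix (lam μ : NatPartition) (A : ℕ → ℕ → ℕ)
    (hA01 : ∀ i j, A i j ≤ 1)
    (hAfin : (Function.support fun p : ℕ × ℕ => A p.1 p.2).Finite)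
    (hcol : ∀ j, ∑ᶠ i, A i j = lam.conj j)
    (hrow : ∀ i, ∑ᶠ j, A i j = μ.f i) :
    μ.size = lam.size ∧
      ∀ k, ∑ i ∈ Finset.range k, μ.f i ≤ ∑ i ∈ Finset.range k, lam.f i := by
  classical
  set Fs := hAfin.toFinset with hFs
  set B : ℕ := (Fs.sup fun p => max p.1 p.2) + (lam.finite_support.toFinset.sup id) +
      (μ.finite_support.toFinset.sup id) + lam.f 0 + 1 with hB
  have hA0 : ∀ i j : ℕ, B ≤ i ∨ B ≤ j → A i j = 0 := by
    intro i j h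
    by_contra hne
    have hmem : (i, j) ∈ Fs := by
      rw [hFs, Set.Finite.mem_toFinset]; exact hne
    have hle := Finset.le_sup (f := fun p : ℕ × ℕ => max p.1 p.2) hmem
    simp only at hle
    omega
  have hlam0 : ∀ i, B ≤ i → lam.f i = 0 := by
    intro i hi
    by_contra hne
    have hmem : i ∈ lam.finite_support.toFinset := by
      rw [Set.Finite.mem_toFinset]; exact hne
    have hle := Finset.le_sup (f := id) hmem
    simp only [id] at hle
    omega
  have hmu0 : ∀ i, B ≤ i → μ.f i = 0 := by
    intro i hi
    by_contra hne
    have hmem : i ∈ μ.finite_support.toFinset := by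
      rw [Set.Finite.mem_toFinset]; exact hne
    have hle := Finset.le_sup (f := id) hmem
    simp only [id] at hle
    omega
  have hlamlt : ∀ i, lam.f i < B := by
    intro i
    have := lam.antitone (Nat.zero_le i)
    omega
  -- column sums as finite sums
  have hcolN : ∀ N, B ≤ N → ∀ j, lam.conj j = ∑ i ∈ Finset.range N, A i j := by
    intro N hN j
    rw [← hcol j]
    apply finsum_eq_sum_of_support_subset
    intro i hi
    simp only [Function.mem_support] at hi
    simp only [Finset.coe_range, Set.mem_Iio]
    by_contra h
    push_neg at h
    exact hi (hA0 i j (Or.inl (by omega)))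
  -- row sums as finite sums
  have hrowN : ∀ N, B ≤ N → ∀ i, μ.f i = ∑ j ∈ Finset.range N, A i j := by
    intro N hN i
    rw [← hrow i]
    apply finsum_eq_sum_of_support_subset
    intro j hj
    simp only [Function.mem_support] at hj
    simp only [Finset.coe_range, Set.mem_Iio]
    by_contra h
    push_neg at h
    exact hj (hA0 i j (Or.inr (by omega)))
  have hmin : ∀ k j, ((Finset.range k).filter fun i => j + 1 ≤ lam.f i) =
      Finset.range (min k (lam.conj j)) := by
    intro k j
    ext a
    simp only [Finset.mem_filter, Finset.mem_range, lt_min_iff, natpart_conj_iff]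
  have hident : ∀ N, B ≤ N → ∀ k,
      ∑ j ∈ Finset.range N, min k (lam.conj j) = ∑ i ∈ Finset.range k, lam.f i := by
    intro N hN k
    have h1 : ∀ j, min k (lam.conj j) =
        ∑ i ∈ Finset.range k, if j + 1 ≤ lam.f i then 1 else 0 := by
      intro j
      rw [← Finset.card_filter, hmin, Finset.card_range]
    calc ∑ j ∈ Finset.range N, min k (lam.conj j)
        = ∑ j ∈ Finset.range N, ∑ i ∈ Finset.range k,
            if j + 1 ≤ lam.f i then 1 else 0 :=
          Finset.sum_congr rfl fun j _ => h1 j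
      _ = ∑ i ∈ Finset.range k, ∑ j ∈ Finset.range N,
            if j + 1 ≤ lam.f i then 1 else 0 := Finset.sum_comm
      _ = ∑ i ∈ Finset.range k, lam.f i := by
          refine Finset.sum_congr rfl fun i _ => ?_
          rw [← Finset.card_filter]
          have hfil : (Finset.range N).filter (fun j => j + 1 ≤ lam.f i) =
              Finset.range (lam.f i) := by
            ext a
            simp only [Finset.mem_filter, Finset.mem_range]
            have h1 := hlamlt i
            omega
          rw [hfil, Finset.card_range]
  have hsizeμ : μ.size = ∑ i ∈ Finset.range B, μ.f i := by
    apply finsum_eq_sum_of_support_subset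
    intro i hi
    simp only [Function.mem_support] at hi
    simp only [Finset.coe_range, Set.mem_Iio]
    by_contra h
    push_neg at h
    exact hi (hmu0 i h)
  have hsizelam : lam.size = ∑ i ∈ Finset.range B, lam.f i := by
    apply finsum_eq_sum_of_support_subset
    intro i hi
    simp only [Function.mem_support] at hi
    simp only [Finset.coe_range, Set.mem_Iio]
    by_contra h
    push_neg at h
    exact hi (hlam0 i h)
  have hconjleB : ∀ j, lam.conj j ≤ B := by
    intro j
    rw [hcolN B le_rfl j]
    calc ∑ i ∈ Finset.range B, A i j ≤ ∑ i ∈ Finset.range B, 1 :=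
          Finset.sum_le_sum fun i _ => hA01 i j
      _ = B := by simp
  constructor
  · rw [hsizeμ, hsizelam]
    calc ∑ i ∈ Finset.range B, μ.f i
        = ∑ i ∈ Finset.range B, ∑ j ∈ Finset.range B, A i j :=
          Finset.sum_congr rfl fun i _ => hrowN B le_rfl i
      _ = ∑ j ∈ Finset.range B, ∑ i ∈ Finset.range B, A i j := Finset.sum_comm
      _ = ∑ j ∈ Finset.range B, lam.conj j :=
          Finset.sum_congr rfl fun j _ => (hcolN B le_rfl j).symm
      _ = ∑ j ∈ Finset.range B, min B (lam.conj j) :=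
          Finset.sum_congr rfl fun j _ => (min_eq_right (hconjleB j)).symm
      _ = ∑ i ∈ Finset.range B, lam.f i := hident B le_rfl B
  · intro k
    set M := max B k with hM
    have hBM : B ≤ M := le_max_left _ _
    have hkM : k ≤ M := le_max_right _ _
    calc ∑ i ∈ Finset.range k, μ.f i
        = ∑ i ∈ Finset.range k, ∑ j ∈ Finset.range M, A i j :=
          Finset.sum_congr rfl fun i _ => hrowN M hBM i
      _ = ∑ j ∈ Finset.range M, ∑ i ∈ Finset.range k, A i j := Finset.sum_comm
      _ ≤ ∑ j ∈ Finset.range M, min k (lam.conj j) := by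
          refine Finset.sum_le_sum fun j _ => le_min ?_ ?_
          · calc ∑ i ∈ Finset.range k, A i j ≤ ∑ i ∈ Finset.range k, 1 :=
                  Finset.sum_le_sum fun i _ => hA01 i j
              _ = k := by simp
          · rw [hcolN M hBM j]
            exact Finset.sum_le_sum_of_subset
              (Finset.range_subset_range.mpr hkM)
      _ = ∑ i ∈ Finset.range k, lam.f i := hident M hBM k
end

section
/- Let λ be a partition with conjugate partition λ'. Then there is exactly one ℕ-by-ℕ matrix with entries in {0,1} and finite support whose column sums are λ' and whose row sums are λ, namely the indicator matrix of the Young diagram of λ (the matrix with entry 1 in position (i,j) exactly when j ≤ λ_i). -/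
/-- The indicator matrix of the Young diagram of `λ`: entry `1` in position
`(i,j)` exactly when cell `(i,j)` lies in the diagram. -/
def youngMatrix (l : NatPartition) (i j : ℕ) : ℕ := if j < l.f i then 1 else 0

lemma conj_finite (lam : NatPartition) (j : ℕ) : {i : ℕ | j + 1 ≤ lam.f i}.Finite :=
  lam.finite_support.subset (fun i hi => by
    simp only [Set.mem_setOf_eq] at hi
    simp only [Function.support, Set.mem_setOf_eq]
    omega)

lemma conj_eq_card (lam : NatPartition) (j : ℕ) :
    lam.conj j = (conj_finite lam j).toFinset.card := by
  rw [NatPartition.conj]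
  have : {i : ℕ // j + 1 ≤ lam.f i} = {i : ℕ | j + 1 ≤ lam.f i} := rfl
  rw [this, Nat.card_eq_card_finite_toFinset (conj_finite lam j)]

lemma conj_eq_sum (lam : NatPartition) (j N : ℕ) (hN : ∀ i, N ≤ i → lam.f i = 0) :
    lam.conj j = ∑ i ∈ Finset.range N, youngMatrix lam i j := by
  rw [conj_eq_card, Finset.card_eq_sum_ones]
  rw [show (∑ i ∈ Finset.range N, youngMatrix lam i j) =
      ∑ i ∈ (Finset.range N).filter (fun i => j < lam.f i), 1 by
    rw [Finset.sum_filter]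
    exact Finset.sum_congr rfl fun i _ => by simp [youngMatrix]]
  congr 1
  ext i
  simp only [Set.Finite.mem_toFinset, Set.mem_setOf_eq, Finset.mem_filter, Finset.mem_range]
  constructor
  · intro h
    refine ⟨?_, by omega⟩
    by_contra hc
    have := hN i (by omega)
    omega
  · intro h; omega

/-- The indicator matrix of the Young diagram of `λ` is the unique `{0,1}`-matrix
with finite support, column sums `λ'` and row sums `λ`. -/
theorem young_matrix_unique (lam : NatPartition) :
    ((∀ i j, youngMatrix lam i j ≤ 1) ∧
      (Function.support fun p : ℕ × ℕ => youngMatrix lam p.1 p.2).Finite ∧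
      (∀ j, ∑ᶠ i, youngMatrix lam i j = lam.conj j) ∧
      (∀ i, ∑ᶠ j, youngMatrix lam i j = lam.f i)) ∧
    ∀ A : ℕ → ℕ → ℕ,
      (∀ i j, A i j ≤ 1) →
      (Function.support fun p : ℕ × ℕ => A p.1 p.2).Finite →
      (∀ j, ∑ᶠ i, A i j = lam.conj j) →
      (∀ i, ∑ᶠ j, A i j = lam.f i) →
      A = youngMatrix lam := by
  -- a bound beyond which f vanishes
  obtain ⟨M, hM⟩ : ∃ M, ∀ i, M ≤ i → lam.f i = 0 := by
    obtain ⟨M, hM⟩ := lam.finite_support.bddAbove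
    refine ⟨M + 1, fun i hi => ?_⟩
    by_contra hc
    have : i ∈ Function.support lam.f := hc
    have := hM this
    omega
  have hf_le : ∀ i, lam.f i ≤ lam.f 0 := fun i => lam.antitone (Nat.zero_le i)
  refine ⟨⟨?_, ?_, ?_, ?_⟩, ?_⟩
  · intro i j; unfold youngMatrix; split <;> simp
  · refine Set.Finite.subset ((lam.finite_support.prod (Set.finite_Iio (lam.f 0)))) ?_
    rintro ⟨i, j⟩ hij
    simp only [Function.support, Set.mem_setOf_eq, youngMatrix] at hij
    split at hij
    · next h =>
      constructor
      · simp only [Function.support, Set.mem_setOf_eq]; omega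
      · simp only [Set.mem_Iio]
        exact lt_of_lt_of_le h (hf_le i)
    · simp at hij
  · intro j
    rw [finsum_eq_sum_of_support_subset _ (s := Finset.range M) ?_, ← conj_eq_sum lam j M hM]
    intro i hi
    simp only [Function.support, Set.mem_setOf_eq, youngMatrix] at hi
    simp only [Finset.coe_range, Set.mem_Iio]
    by_contra hc
    rw [hM i (by omega)] at hi
    simp at hi
  · intro i
    rw [finsum_eq_sum_of_support_subset _ (s := Finset.range (lam.f i)) ?_]
    · rw [show (∑ j ∈ Finset.range (lam.f i), youngMatrix lam i j)
          = ∑ j ∈ Finset.range (lam.f i), 1 from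
        Finset.sum_congr rfl fun j hj => by
          simp only [Finset.mem_range] at hj; simp [youngMatrix, hj]]
      simp
    · intro j hj
      simp only [Function.support, Set.mem_setOf_eq, youngMatrix] at hj
      simp only [Finset.coe_range, Set.mem_Iio]
      by_contra hc
      simp [Nat.not_lt.mp (by omega : ¬ j < lam.f i)] at hj
  · intro A hA1 hAfin hAcol hArow
    -- bound for A's support
    obtain ⟨NA, hNA⟩ : ∃ NA, ∀ i j, NA ≤ i ∨ NA ≤ j → A i j = 0 := by
      refine ⟨(hAfin.toFinset.sup Prod.fst + 1) ⊔ (hAfin.toFinset.sup Prod.snd + 1),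
        fun i j h => ?_⟩
      by_contra hc
      have hmem : (i, j) ∈ hAfin.toFinset := by
        simp only [Set.Finite.mem_toFinset, Function.support, Set.mem_setOf_eq]
        exact hc
      have h1 := Finset.le_sup (f := Prod.fst) hmem
      have h2 := Finset.le_sup (f := Prod.snd) hmem
      simp only [sup_le_iff] at h
      omega
    set N := M ⊔ NA ⊔ (lam.f 0 + 1) with hNdef
    have hNf : ∀ i, N ≤ i → lam.f i = 0 := fun i hi => hM i (by omega)
    have hNA' : ∀ i j, N ≤ i ∨ N ≤ j → A i j = 0 := fun i j h => hNA i j (by omega)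
    have hfN : ∀ i, lam.f i < N := fun i => lt_of_le_of_lt (hf_le i) (by omega)
    -- finite row and column sums
    have hrow : ∀ i, ∑ j ∈ Finset.range N, A i j = lam.f i := by
      intro i
      rw [← hArow i, finsum_eq_sum_of_support_subset]
      intro j hj
      simp only [Function.support, Set.mem_setOf_eq] at hj
      simp only [Finset.coe_range, Set.mem_Iio]
      by_contra hc
      exact hj (hNA' i j (Or.inr (by omega)))
    have hcol : ∀ j, ∑ i ∈ Finset.range N, A i j = lam.conj j := by
      intro j
      rw [← hAcol j, finsum_eq_sum_of_support_subset]
      intro i hi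
      simp only [Function.support, Set.mem_setOf_eq] at hi
      simp only [Finset.coe_range, Set.mem_Iio]
      by_contra hc
      exact hi (hNA' i j (Or.inl (by omega)))
    -- tail sums
    set T : ℕ → ℕ → ℕ := fun i j => ∑ j' ∈ Finset.Ico j N, A i j' with hTdef
    -- lower bound on tail sums
    have claim1 : ∀ i j, lam.f i ≤ j + T i j := by
      intro i j
      rcases le_or_gt N j with h | h
      · have := hfN i; omega
      · have hT : T i j = ∑ j' ∈ Finset.Ico j N, A i j' := rfl
        have hsplit : lam.f i
            = (∑ j' ∈ Finset.Ico 0 j, A i j') + ∑ j' ∈ Finset.Ico j N, A i j' := by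
          rw [Finset.sum_Ico_consecutive _ (Nat.zero_le j) (le_of_lt h),
            ← Finset.range_eq_Ico, hrow i]
        have hle : (∑ j' ∈ Finset.Ico 0 j, A i j') ≤ j := by
          calc (∑ j' ∈ Finset.Ico 0 j, A i j') ≤ ∑ j' ∈ Finset.Ico 0 j, 1 :=
                Finset.sum_le_sum fun j' _ => hA1 i j'
            _ = j := by simp
        omega
    -- tail sums of the young matrix
    have hTY : ∀ i j, (∑ j' ∈ Finset.Ico j N, youngMatrix lam i j') = lam.f i - j := by
      intro i j
      rw [show (∑ j' ∈ Finset.Ico j N, youngMatrix lam i j')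
          = ∑ j' ∈ (Finset.Ico j N).filter (fun j' => j' < lam.f i), 1 by
        rw [Finset.sum_filter]
        exact Finset.sum_congr rfl fun j' _ => by simp [youngMatrix]]
      rw [show (Finset.Ico j N).filter (fun j' => j' < lam.f i) = Finset.Ico j (lam.f i) by
        ext j'
        simp only [Finset.mem_filter, Finset.mem_Ico]
        have := hfN i
        omega]
      simp
    -- sum of tail sums agrees with that of the young matrix
    have claim2 : ∀ j, ∑ i ∈ Finset.range N, T i j = ∑ i ∈ Finset.range N, (lam.f i - j) := by
      intro j
      rw [hTdef]
      simp only
      rw [Finset.sum_comm]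
      rw [show (∑ j' ∈ Finset.Ico j N, ∑ i ∈ Finset.range N, A i j')
          = ∑ j' ∈ Finset.Ico j N, ∑ i ∈ Finset.range N, youngMatrix lam i j' from
        Finset.sum_congr rfl fun j' _ => by rw [hcol j', conj_eq_sum lam j' N hNf]]
      rw [Finset.sum_comm]
      exact Finset.sum_congr rfl fun i _ => hTY i j
    -- hence tail sums are exactly f i - j
    have claim3 : ∀ j, ∀ i ∈ Finset.range N, T i j = lam.f i - j := by
      intro j
      have hle : ∀ i ∈ Finset.range N, lam.f i - j ≤ T i j :=
        fun i _ => by have := claim1 i j; omega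
      intro i hi
      exact ((Finset.sum_eq_sum_iff_of_le hle).mp ((claim2 j).symm) i hi).symm
    funext i j
    rcases lt_or_ge i N with hi | hi
    · rcases lt_or_ge j N with hj | hj
      · have h1 : T i j = lam.f i - j := claim3 j i (Finset.mem_range.mpr hi)
        have h2 : T i (j + 1) = lam.f i - (j + 1) := claim3 (j + 1) i (Finset.mem_range.mpr hi)
        have hstep : T i j = A i j + T i (j + 1) := by
          rw [hTdef]
          exact Finset.sum_eq_sum_Ico_succ_bot hj _
        have := hfN i
        simp only [youngMatrix]
        split <;> omega
      · rw [hNA' i j (Or.inr hj)]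
        have := hfN i
        simp only [youngMatrix]
        rw [if_neg (by omega)]
    · rw [hNA' i j (Or.inl hi)]
      have := hNf i hi
      simp only [youngMatrix]
      rw [if_neg (by omega)]
end

section
/- Let λ = (λ_1 ≥ … ≥ λ_s > 0) be a partition with s parts and let n be a natural number. In the polynomial ring ℤ[x_1,…,x_n], the product of elementary symmetric polynomials e_{λ_1}·e_{λ_2}···e_{λ_s} equals Σ_μ a_{λμ}·m_μ, where the sum runs over all partitions μ of |λ| with at most n parts, m_μ is the monomial symmetric polynomial of μ (the sum of all distinct monomials x_1^{α_1}···x_n^{α_n} with (α_1,…,α_n) a permutation of (μ_1,…,μ_n)), and a_{λμ} is the number of finitely supported functions A : ℕ⁺ × {1,…,s} → {0,1} whose t-th column sum is λ_t for each t ∈ {1,…,s} and whose i-th row sum is μ_i for each i. -/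
/-- The monomial symmetric polynomial in `ℤ[x_1,…,x_n]` attached to an exponent
vector `μ : Fin n → ℕ`: the sum of all distinct monomials `x^α` where `α` is a
permutation of `μ`. -/
noncomputable def monomialSym (n : ℕ) (μ : Fin n → ℕ) : MvPolynomial (Fin n) ℤ :=
  ∑ α ∈ Finset.univ.image (fun σ : Equiv.Perm (Fin n) => μ ∘ σ),
    MvPolynomial.monomial (Finsupp.equivFunOnFinite.symm α) (1 : ℤ)

/-- `a_{λμ}`: the number of finitely supported `{0,1}`-matrices
`A : ℕ⁺ × {1,…,s} → {0,1}` with column sums `λ` and row sums `μ`. -/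
noncomputable def aCoeff (s : ℕ) (lam μ : NatPartition) : ℕ :=
  Nat.card {A : ℕ → Fin s → ℕ //
    (∀ i t, A i t ≤ 1) ∧
    (Function.support fun pr : ℕ × Fin s => A pr.1 pr.2).Finite ∧
    (∀ t : Fin s, ∑ᶠ i, A i t = lam.f t) ∧
    (∀ i, ∑ t : Fin s, A i t = μ.f i)}

/-!
Expanding each `e_{λ_t}` as the sum of `∏_{i ∈ S} x_i` over the `λ_t`-subsets `S` of the
variables, the product becomes a sum over `n × s` `0/1`-matrices with column sums `λ`, each
contributing the monomial whose exponent vector is its row sums. So the coefficient of `x^α` is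
the number of such matrices with row sums `α`, which does not change when `α` is permuted.
Grouping the exponent vectors by their decreasing rearrangement `μ` collects the monomials into
`m_μ`, and `a_{λμ}` counts the same matrices because rows beyond the `n`-th have sum `0`.
-/

open Finset MvPolynomial

section SortDesc

variable {α : Type*} [LinearOrder α] {n : ℕ}

def Tuple.sortDesc (f : Fin n → α) : Equiv.Perm (Fin n) :=
  Tuple.sort (OrderDual.toDual ∘ f)

theorem Tuple.antitone_sortDesc (f : Fin n → α) : Antitone (f ∘ Tuple.sortDesc f) :=
  Tuple.monotone_sort (OrderDual.toDual ∘ f)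

theorem Tuple.comp_perm_eq_of_antitone {f : Fin n → α} {σ : Equiv.Perm (Fin n)}
    (hf : Antitone f) (hfσ : Antitone (f ∘ σ)) : f ∘ σ = f :=
  Tuple.unique_monotone (f := OrderDual.toDual ∘ f) (τ := 1) hfσ hf

theorem Tuple.filter_sortDesc_eq_image_perm {T : Finset (Fin n → α)}
    (hT : ∀ f ∈ T, ∀ σ : Equiv.Perm (Fin n), f ∘ σ ∈ T) {β : Fin n → α} (hβT : β ∈ T)
    (hβ : Antitone β) :
    T.filter (fun f => f ∘ Tuple.sortDesc f = β)
      = univ.image fun σ : Equiv.Perm (Fin n) => β ∘ σ := by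
  ext f
  simp only [mem_filter, mem_image, mem_univ, true_and]
  constructor
  · rintro ⟨-, hf⟩
    refine ⟨(Tuple.sortDesc f)⁻¹, ?_⟩
    rw [← hf, Function.comp_assoc, ← Equiv.Perm.coe_mul, mul_inv_cancel, Equiv.Perm.coe_one,
      Function.comp_id]
  · rintro ⟨σ, rfl⟩
    refine ⟨hT β hβT σ, ?_⟩
    rw [Function.comp_assoc, ← Equiv.Perm.coe_mul]
    refine Tuple.comp_perm_eq_of_antitone hβ ?_
    simpa only [Equiv.Perm.coe_mul, Function.comp_assoc] using Tuple.antitone_sortDesc (β ∘ σ)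

end SortDesc

theorem sum_mul_monomial_eq_sum_antitone_mul_monomialSym {n : ℕ} {T : Finset (Fin n → ℕ)}
    (hT : ∀ f ∈ T, ∀ σ : Equiv.Perm (Fin n), f ∘ σ ∈ T) (c : (Fin n → ℕ) → MvPolynomial (Fin n) ℤ)
    (hc : ∀ f (σ : Equiv.Perm (Fin n)), c (f ∘ σ) = c f) :
    ∑ f ∈ T, c f * monomial (Finsupp.equivFunOnFinite.symm f) 1
      = ∑ β ∈ T.filter Antitone, c β * monomialSym n β := by
  have hsort : ∀ f ∈ T, f ∘ Tuple.sortDesc f ∈ T.filter Antitone := fun f hf =>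
    mem_filter.2 ⟨hT f hf _, Tuple.antitone_sortDesc f⟩
  rw [← sum_fiberwise_of_maps_to hsort]
  refine sum_congr rfl fun β hβ => ?_
  obtain ⟨hβT, hβ⟩ := mem_filter.1 hβ
  rw [Tuple.filter_sortDesc_eq_image_perm hT hβT hβ, monomialSym, mul_sum]
  refine sum_congr rfl fun f hf => ?_
  obtain ⟨σ, -, rfl⟩ := mem_image.1 hf
  rw [hc]

theorem Finset.Nat.comp_perm_mem_antidiagonalTuple {k N : ℕ} {f : Fin k → ℕ}
    (hf : f ∈ Nat.antidiagonalTuple k N) (σ : Equiv.Perm (Fin k)) :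
    f ∘ σ ∈ Nat.antidiagonalTuple k N := by
  rw [Nat.mem_antidiagonalTuple] at hf ⊢
  exact (Equiv.sum_comp σ f).trans hf

theorem finsum_eq_sum_fin_of_eq_zero {M : Type*} [AddCommMonoid M] {n : ℕ} {f : ℕ → M}
    (hf : ∀ i, n ≤ i → f i = 0) : ∑ᶠ i, f i = ∑ i : Fin n, f i := by
  rw [finsum_eq_sum_of_support_subset f (s := range n), Fin.sum_univ_eq_sum_range]
  intro i hi
  by_contra hin
  exact hi (hf i (by simpa using hin))

namespace NatPartition

theorem size_eq_sum_fin (l : NatPartition) {n : ℕ} (hl : ∀ i, n ≤ i → l.f i = 0) :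
    l.size = ∑ i : Fin n, l.f i :=
  finsum_eq_sum_fin_of_eq_zero hl

theorem ext_of_eq_zero {n : ℕ} {μ ν : NatPartition} (hμ : ∀ i, n ≤ i → μ.f i = 0)
    (hν : ∀ i, n ≤ i → ν.f i = 0) (h : ∀ i : Fin n, μ.f i = ν.f i) : μ = ν := by
  suffices μ.f = ν.f by cases μ; cases ν; cases this; rfl
  funext i
  by_cases hi : i < n
  · exact h ⟨i, hi⟩
  · exact (hμ i (not_lt.1 hi)).trans (hν i (not_lt.1 hi)).symm

def ofAntitone {n : ℕ} {β : Fin n → ℕ} (hβ : Antitone β) : NatPartition where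
  f i := if h : i < n then β ⟨i, h⟩ else 0
  antitone i j hij := by
    by_cases hj : j < n
    · rw [dif_pos (hij.trans_lt hj), dif_pos hj]
      exact hβ (show (⟨i, _⟩ : Fin n) ≤ ⟨j, hj⟩ from hij)
    · rw [dif_neg hj]
      exact Nat.zero_le _
  finite_support := (Set.finite_Iio n).subset fun i hi => by
    by_contra hin
    exact hi (dif_neg hin)

/-- Partitions with at most `n` parts are the antitone `n`-tuples. -/
theorem finsum_mem_eq_sum_antitone {M : Type*} [AddCommMonoid M] (n N : ℕ)
    (g : (Fin n → ℕ) → M) :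
    ∑ᶠ μ ∈ {μ : NatPartition | μ.size = N ∧ ∀ i, n ≤ i → μ.f i = 0}, g (fun i => μ.f i)
      = ∑ β ∈ (Nat.antidiagonalTuple n N).filter Antitone, g β := by
  rw [← finsum_mem_coe_finset]
  refine finsum_mem_eq_of_bijOn (fun μ (i : Fin n) => μ.f i) ⟨?_, ?_, ?_⟩ fun _ _ => rfl
  · rintro μ ⟨hsize, hμ⟩
    simp only [coe_filter, Nat.mem_antidiagonalTuple, Set.mem_ofPred_eq]
    exact ⟨(μ.size_eq_sum_fin hμ).symm.trans hsize, fun i j hij => μ.antitone hij⟩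
  · rintro μ ⟨-, hμ⟩ ν ⟨-, hν⟩ h
    exact ext_of_eq_zero hμ hν (congrFun h)
  · intro β hβ
    simp only [coe_filter, Nat.mem_antidiagonalTuple, Set.mem_ofPred_eq] at hβ
    have hzero : ∀ i, n ≤ i → (ofAntitone hβ.2).f i = 0 := fun i hi => dif_neg (not_lt.2 hi)
    refine ⟨ofAntitone hβ.2, ⟨?_, hzero⟩, funext fun i => dif_pos i.isLt⟩
    rw [size_eq_sum_fin _ hzero]
    exact (sum_congr rfl fun i _ => dif_pos i.isLt).trans hβ.1

end NatPartition

section ZeroOneMatrix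

variable {ι κ : Type*} [Fintype ι] [Fintype κ]

noncomputable def zeroOneMatrixCount (col : κ → ℕ) (row : ι → ℕ) : ℕ :=
  Nat.card {B : ι → κ → ℕ //
    (∀ i t, B i t ≤ 1) ∧ (∀ t, ∑ i, B i t = col t) ∧ (∀ i, ∑ t, B i t = row i)}

theorem zeroOneMatrixCount_comp_equiv {ι' : Type*} [Fintype ι'] (col : κ → ℕ) (row : ι → ℕ)
    (e : ι' ≃ ι) : zeroOneMatrixCount col (row ∘ e) = zeroOneMatrixCount col row := by
  refine Nat.card_congr ((e.arrowCongr (Equiv.refl _)).subtypeEquiv fun B => ?_)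
  simp only [Equiv.arrowCongr_apply, Equiv.coe_refl, Function.comp_apply, id]
  refine and_congr e.symm.forall_congr_right.symm (and_congr ?_ ?_)
  · exact forall_congr' fun t => by rw [← e.symm.sum_comp]
  · exact e.symm.forall_congr_right.symm.trans (forall_congr' fun i => by simp)

variable [DecidableEq ι]

def rowSum (F : κ → Finset ι) (i : ι) : ℕ :=
  #{t | i ∈ F t}

def zeroOneMatrixEquivColumns :
    {B : ι → κ → ℕ // ∀ i t, B i t ≤ 1} ≃ (κ → Finset ι) where
  toFun B t := {i | B.1 i t = 1}
  invFun F := ⟨fun i t => if i ∈ F t then 1 else 0, fun i t => by dsimp only; split_ifs <;> simp⟩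
  left_inv B := by
    ext i t
    have := B.2 i t
    simp only [mem_filter, mem_univ, true_and]
    split_ifs <;> omega
  right_inv F := by
    ext t i
    simp

theorem zeroOneMatrixCount_eq_card_filter [DecidableEq κ] (col : κ → ℕ) (row : ι → ℕ) :
    zeroOneMatrixCount col row
      = #{F ∈ Fintype.piFinset fun t => powersetCard (col t) univ | rowSum F = row} := by
  rw [zeroOneMatrixCount, ← Nat.card_eq_finsetCard]
  refine Nat.card_congr ((Equiv.subtypeSubtypeEquivSubtypeInter _ _).symm.trans
    ((zeroOneMatrixEquivColumns (ι := ι) (κ := κ)).symm.subtypeEquiv fun F => ?_).symm)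
  simp only [mem_filter, Fintype.mem_piFinset, mem_powersetCard_univ, zeroOneMatrixEquivColumns,
    Equiv.coe_fn_symm_mk, funext_iff, rowSum, card_filter]
  simp only [sum_boole, filter_mem_eq_inter, univ_inter, Nat.cast_id]

theorem sum_rowSum (F : κ → Finset ι) : ∑ i, rowSum F i = ∑ t, #(F t) := by
  simp only [rowSum, card_filter]
  rw [sum_comm]
  simp

theorem prod_esymm_eq_sum_monomial_rowSum {R : Type*} [CommSemiring R] [DecidableEq κ]
    (col : κ → ℕ) :
    ∏ t, esymm ι R (col t)
      = ∑ F ∈ Fintype.piFinset fun t => powersetCard (col t) univ,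
          monomial (Finsupp.equivFunOnFinite.symm (rowSum F)) 1 := by
  simp_rw [esymm_eq_sum_monomial, prod_univ_sum, ← monomial_sum_one]
  refine sum_congr rfl fun F _ => congrArg (monomial · (1 : R)) (Finsupp.ext fun i => ?_)
  simp [Finsupp.finsetSum_apply, Finsupp.single_apply, rowSum]

end ZeroOneMatrix

theorem prod_esymm_eq_sum_zeroOneMatrixCount_mul_monomial {R κ : Type*} [CommSemiring R]
    [Fintype κ] [DecidableEq κ] (n : ℕ) (col : κ → ℕ) :
    ∏ t, esymm (Fin n) R (col t)
      = ∑ α ∈ Nat.antidiagonalTuple n (∑ t, col t),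
          (zeroOneMatrixCount col α : MvPolynomial (Fin n) R)
            * monomial (Finsupp.equivFunOnFinite.symm α) 1 := by
  have hrow : ∀ F ∈ Fintype.piFinset (fun t => powersetCard (col t) (univ : Finset (Fin n))),
      rowSum F ∈ Nat.antidiagonalTuple n (∑ t, col t) := by
    intro F hF
    simp only [Fintype.mem_piFinset, mem_powersetCard_univ] at hF
    rw [Nat.mem_antidiagonalTuple, sum_rowSum]
    exact sum_congr rfl fun t _ => hF t
  rw [prod_esymm_eq_sum_monomial_rowSum, ← sum_fiberwise_of_maps_to hrow]
  refine sum_congr rfl fun α _ => ?_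
  rw [sum_congr rfl fun F hF => by rw [(mem_filter.1 hF).2], sum_const, nsmul_eq_mul,
    zeroOneMatrixCount_eq_card_filter]

theorem aCoeff_eq_zeroOneMatrixCount {n : ℕ} (s : ℕ) (lam : NatPartition) {μ : NatPartition}
    (hμ : ∀ i, n ≤ i → μ.f i = 0) :
    aCoeff s lam μ = zeroOneMatrixCount (fun t : Fin s => lam.f t) (fun i : Fin n => μ.f i) := by
  have hzero : ∀ {A : ℕ → Fin s → ℕ}, (∀ i, ∑ t, A i t = μ.f i) → ∀ i, n ≤ i → ∀ t, A i t = 0 :=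
    fun hrow i hi t => sum_eq_zero_iff.1 ((hrow i).trans (hμ i hi)) t (mem_univ t)
  let extend (B : Fin n → Fin s → ℕ) (i : ℕ) (t : Fin s) : ℕ :=
    if h : i < n then B ⟨i, h⟩ t else 0
  have extend_of_le (B : Fin n → Fin s → ℕ) (i : ℕ) (hi : n ≤ i) (t : Fin s) : extend B i t = 0 :=
    dif_neg hi.not_gt
  refine Nat.card_congr
    { toFun A := ⟨fun i t => A.1 i t, fun i t => A.2.1 i t, fun t => ?_, fun i => A.2.2.2.2 i⟩
      invFun B := ⟨extend B.1, ?_, ?_, ?_, ?_⟩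
      left_inv A := ?_
      right_inv B := ?_ }
  · exact (finsum_eq_sum_fin_of_eq_zero fun i hi => hzero A.2.2.2.2 i hi t).symm.trans (A.2.2.2.1 t)
  · intro i t
    dsimp only [extend]
    split_ifs
    exacts [B.2.1 _ t, zero_le_one]
  · refine ((Set.finite_Iio n).prod Set.finite_univ).subset fun ⟨i, t⟩ h => ⟨?_, trivial⟩
    by_contra hin
    exact h (extend_of_le B.1 i (not_lt.1 hin) t)
  · intro t
    rw [finsum_eq_sum_fin_of_eq_zero fun i hi => extend_of_le B.1 i hi t]
    simpa [extend] using B.2.2.1 t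
  · intro i
    by_cases hi : i < n
    · simpa [extend, hi] using B.2.2.2 ⟨i, hi⟩
    · rw [hμ i (not_lt.1 hi)]
      exact sum_eq_zero fun t _ => extend_of_le _ _ (not_lt.1 hi) t
  · ext i t
    by_cases hi : i < n
    · simp [extend, hi]
    · exact (extend_of_le _ _ (not_lt.1 hi) t).trans (hzero A.2.2.2.2 i (not_lt.1 hi) t).symm
  · ext i t
    simp [extend]

/-- For a partition `λ` with `s` parts, the product of elementary symmetric
polynomials `e_{λ_1}⋯e_{λ_s}` in `ℤ[x_1,…,x_n]` equals `Σ_μ a_{λμ}·m_μ`, summed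
over all partitions `μ` of `|λ|` with at most `n` parts. -/
theorem esymm_prod_eq_sum_monomialSym (n s : ℕ) (lam : NatPartition)
    (hs : ∀ i, 0 < lam.f i ↔ i < s) :
    ∏ t : Fin s, MvPolynomial.esymm (Fin n) ℤ (lam.f t)
      = ∑ᶠ μ ∈ {μ : NatPartition | μ.size = lam.size ∧ ∀ i, n ≤ i → μ.f i = 0},
          (aCoeff s lam μ : MvPolynomial (Fin n) ℤ) *
            monomialSym n (fun i => μ.f i) := by
  have hsize : lam.size = ∑ t : Fin s, lam.f t :=
    lam.size_eq_sum_fin fun i hi => Nat.eq_zero_of_not_pos fun h => ((hs i).1 h).not_ge hi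
  rw [finsum_mem_congr rfl fun μ hμ => by rw [aCoeff_eq_zeroOneMatrixCount s lam hμ.2],
    NatPartition.finsum_mem_eq_sum_antitone n lam.size fun β =>
      (zeroOneMatrixCount (fun t : Fin s => lam.f t) β : MvPolynomial (Fin n) ℤ) * monomialSym n β,
    prod_esymm_eq_sum_zeroOneMatrixCount_mul_monomial, hsize]
  refine sum_mul_monomial_eq_sum_antitone_mul_monomialSym
    (fun f hf σ => Finset.Nat.comp_perm_mem_antidiagonalTuple hf σ) _ fun f σ => ?_
  rw [zeroOneMatrixCount_comp_equiv]
end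

section
/- (q-Vandermonde identity) Define, for natural numbers a, b, the Gaussian binomial coefficient as the polynomial B(a,b) = Σ_{K ⊆ {1,…,a}, |K| = b} q^{a(K)} ∈ ℤ[q], where a(K) = #{(i,j) : i ∈ K, j ∉ K, j < i}. Then for all natural numbers x, y, n one has B(x+y, n) = Σ_{k=0}^{n} q^{(x−k)(n−k)} · B(x,k) · B(y,n−k) in ℤ[q]. -/
/-!
Split `{1,…,x+y}` into the blocks `{1,…,x}` and `x + {1,…,y}`: an `n`-subset `K` is uniquely
`A ∪ (x + B)` with `A` a `k`-subset of `{1,…,x}` and `B` an `(n-k)`-subset of `{1,…,y}`. An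
inversion `(i, j)` of `K` is either one of `A`, or a shifted one of `B`, or has `i ∈ x + B` and
`j ∈ {1,…,x} \ A`; there are `(x - k)(n - k)` of the last kind, so
`q ^ a(K) = q ^ ((x - k)(n - k)) · q ^ a(A) · q ^ a(B)`.
-/

/-- The area statistic on subsets `K ⊆ {1,…,N}`:
`a(K) = #{(i,j) : i ∈ K, j ∉ K, j < i}`, where `i, j` range over `{1,…,N}`. -/
def areaStat (N : ℕ) (K : Finset ℕ) : ℕ :=
  ((Finset.Icc 1 N ×ˢ Finset.Icc 1 N).filter
    fun p => p.1 ∈ K ∧ p.2 ∉ K ∧ p.2 < p.1).card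

/-- The Gaussian binomial coefficient `[a choose b]_q ∈ ℤ[q]`, realized as the
generating polynomial of the area statistic on `b`-element subsets of `{1,…,a}`. -/
noncomputable def gaussBinom (a b : ℕ) : Polynomial ℤ :=
  ∑ K ∈ (Finset.Icc 1 a).powersetCard b, Polynomial.X ^ areaStat a K

open Finset Polynomial

namespace Finset

variable {α β : Type*} [DecidableEq α] [AddCommMonoid β]

theorem sum_powersetCard_union {s t : Finset α} (hst : Disjoint s t) (n : ℕ)
    (f : Finset α → β) :
    ∑ K ∈ powersetCard n (s ∪ t), f K =
      ∑ k ∈ range (n + 1), ∑ A ∈ powersetCard k s, ∑ B ∈ powersetCard (n - k) t, f (A ∪ B) := by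
  simp_rw [← sum_product' (f := fun A B => f (A ∪ B))]
  rw [sum_sigma' (range (n + 1)) fun k => powersetCard k s ×ˢ powersetCard (n - k) t]
  have inter_union_inter {K : Finset α} (hK : K ⊆ s ∪ t) : K ∩ s ∪ K ∩ t = K := by
    rw [← inter_union_distrib_left, inter_eq_left.2 hK]
  refine sum_nbij' (fun K => ⟨#(K ∩ s), K ∩ s, K ∩ t⟩) (fun p => p.2.1 ∪ p.2.2) ?_ ?_ ?_ ?_ ?_
  · intro K hK
    rw [mem_powersetCard] at hK
    have hcard := card_union_of_disjoint (s := K ∩ s) (t := K ∩ t)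
      (hst.mono inter_subset_right inter_subset_right)
    rw [inter_union_inter hK.1, hK.2] at hcard
    simp only [mem_sigma, mem_range, mem_product, mem_powersetCard, and_true]
    exact ⟨by omega, inter_subset_right, inter_subset_right, by omega⟩
  · rintro ⟨k, A, B⟩ hp
    simp only [mem_sigma, mem_range, mem_product, mem_powersetCard] at hp ⊢
    obtain ⟨hk, ⟨hA, rfl⟩, hB, hBcard⟩ := hp
    exact ⟨union_subset_union hA hB, by rw [card_union_of_disjoint (hst.mono hA hB)]; omega⟩
  · intro K hK
    exact inter_union_inter (mem_powersetCard.1 hK).1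
  · rintro ⟨k, A, B⟩ hp
    simp only [mem_sigma, mem_range, mem_product, mem_powersetCard] at hp
    obtain ⟨-, ⟨hA, rfl⟩, hB, -⟩ := hp
    have hAs : (A ∪ B) ∩ s = A := by
      rw [union_inter_distrib_right, inter_eq_left.2 hA,
        disjoint_iff_inter_eq_empty.1 (hst.symm.mono_left hB), union_empty]
    have hBt : (A ∪ B) ∩ t = B := by
      rw [union_inter_distrib_right, inter_eq_left.2 hB,
        disjoint_iff_inter_eq_empty.1 (hst.mono_left hA), empty_union]
    simp only [hAs, hBt]
  · intro K hK
    rw [inter_union_inter (mem_powersetCard.1 hK).1]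

end Finset

namespace Nat

theorem mem_map_addRightEmbedding {x j : ℕ} {B : Finset ℕ} :
    j ∈ B.map (addRightEmbedding x) ↔ x ≤ j ∧ j - x ∈ B := by
  simp only [mem_map, addRightEmbedding_apply]
  constructor
  · rintro ⟨b, hb, rfl⟩
    simpa using hb
  · rintro ⟨hj, hjB⟩
    exact ⟨j - x, hjB, by omega⟩

theorem Icc_one_add_eq_union_map (x y : ℕ) :
    Icc 1 (x + y) = Icc 1 x ∪ (Icc 1 y).map (addRightEmbedding x) := by
  ext j
  simp only [mem_union, mem_Icc, mem_map_addRightEmbedding]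
  omega

end Nat

open Nat (mem_map_addRightEmbedding)

theorem areaStat_eq_sum_card_Ico_sdiff {N : ℕ} {K : Finset ℕ} (hK : K ⊆ Icc 1 N) :
    areaStat N K = ∑ i ∈ K, #(Ico 1 i \ K) := by
  rw [areaStat, card_filter, sum_product, ← inter_eq_right.2 hK, ← sum_ite_mem]
  refine sum_congr rfl fun i hi => ?_
  rw [inter_eq_right.2 hK]
  split_ifs with hiK
  · rw [← card_filter]
    congr 1
    ext j
    have hiN := (mem_Icc.1 hi).2
    simp only [mem_filter, mem_Icc, mem_sdiff, mem_Ico, hiK, true_and]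
    grind
  · simp [hiK]

theorem areaStat_union_map_addRight {x y : ℕ} {A B : Finset ℕ} (hA : A ⊆ Icc 1 x)
    (hB : B ⊆ Icc 1 y) :
    areaStat (x + y) (A ∪ B.map (addRightEmbedding x))
      = areaStat x A + areaStat y B + (x - #A) * #B := by
  have hA_bounds : ∀ a ∈ A, 1 ≤ a ∧ a ≤ x := fun a ha => mem_Icc.1 (hA ha)
  have hB_bounds : ∀ b ∈ B, 1 ≤ b ∧ b ≤ y := fun b hb => mem_Icc.1 (hB hb)
  have hdisj : Disjoint A (B.map (addRightEmbedding x)) := by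
    simp only [disjoint_left, mem_map_addRightEmbedding]
    grind
  have hK : A ∪ B.map (addRightEmbedding x) ⊆ Icc 1 (x + y) := by
    intro j
    simp only [mem_union, mem_map_addRightEmbedding, mem_Icc]
    grind
  have lower : ∀ a ∈ A, #(Ico 1 a \ (A ∪ B.map (addRightEmbedding x))) = #(Ico 1 a \ A) := by
    intro a ha
    congr 1
    ext j
    simp only [mem_sdiff, mem_union, mem_Ico, mem_map_addRightEmbedding]
    grind
  have upper : ∀ b ∈ B, #(Ico 1 (b + x) \ (A ∪ B.map (addRightEmbedding x)))
      = (x - #A) + #(Ico 1 b \ B) := by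
    intro b hb
    have hsplit : Ico 1 (b + x) \ (A ∪ B.map (addRightEmbedding x))
        = Icc 1 x \ A ∪ (Ico 1 b \ B).map (addRightEmbedding x) := by
      ext j
      simp only [mem_sdiff, mem_union, mem_Ico, mem_Icc, mem_map_addRightEmbedding]
      grind
    have hdisj' : Disjoint (Icc 1 x \ A) ((Ico 1 b \ B).map (addRightEmbedding x)) := by
      simp only [disjoint_left, mem_sdiff, mem_Icc, mem_map_addRightEmbedding]
      grind
    rw [hsplit, card_union_of_disjoint hdisj', card_map, card_sdiff_of_subset hA, Nat.card_Icc,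
      Nat.add_sub_cancel]
  rw [areaStat_eq_sum_card_Ico_sdiff hK, sum_union hdisj, sum_congr rfl lower, sum_map,
    ← areaStat_eq_sum_card_Ico_sdiff hA]
  simp only [addRightEmbedding_apply]
  rw [sum_congr rfl upper, sum_add_distrib, ← areaStat_eq_sum_card_Ico_sdiff hB, sum_const,
    smul_eq_mul]
  ring

/-- The `q`-Vandermonde identity:
`B(x+y, n) = Σ_{k=0}^{n} q^{(x−k)(n−k)} · B(x,k) · B(y,n−k)` in `ℤ[q]`. -/
theorem q_vandermonde (x y n : ℕ) :
    gaussBinom (x + y) n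
      = ∑ k ∈ Finset.range (n + 1),
          Polynomial.X ^ ((x - k) * (n - k)) * gaussBinom x k * gaussBinom y (n - k) := by
  have hdisj : Disjoint (Icc 1 x) ((Icc 1 y).map (addRightEmbedding x)) := by
    simp only [disjoint_left, mem_Icc, mem_map_addRightEmbedding]
    omega
  rw [gaussBinom, Nat.Icc_one_add_eq_union_map, sum_powersetCard_union hdisj]
  refine sum_congr rfl fun k _ => ?_
  rw [gaussBinom, gaussBinom, mul_sum (powersetCard k (Icc 1 x)), sum_mul]
  refine sum_congr rfl fun A hA => ?_
  rw [mul_sum, powersetCard_map, sum_map]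
  refine sum_congr rfl fun B hB => ?_
  rw [mem_powersetCard] at hA hB
  rw [RelEmbedding.coe_toEmbedding, mapEmbedding_apply,
    areaStat_union_map_addRight hA.1 hB.1, hA.2, hB.2]
  ring
end

section
/- Let F be a finite field with q elements, let k, l be natural numbers and set n = k + l. Then q^{k·l} · N = ∏_{i=0}^{n-1} (q^n − q^i), where N is the number of pairs (i, p) consisting of an injective F-linear map i : F^l → F^n and a surjective F-linear map p : F^n → F^k with ker p = range i (i.e. short exact sequences 0 → F^l → F^n → F^k → 0 with middle term the standard F^n). Equivalently, the groupoid cardinality of the groupoid of extensions of F^k by F^l with middle term isomorphic to F^n equals q^{−kl}. -/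
/-!
An exact sequence `0 → F^l → F^n → F^k → 0` is an injection `i` together with a surjection `p`
with kernel `range i`, and such `p` are exactly the isomorphisms `F^n ⧸ range i ≃ F^k`, a torsor
under `GL_k(F)`. Hence `N = #{injections F^l → F^n} · |GL_k(F)|
= ∏_{i<l} (q^n - q^i) · ∏_{i<k} (q^k - q^i)`, and the factor `q^{kl}` supplies what is missing from
the remaining factors `q^n - q^{l+i} = q^l (q^k - q^i)` of `|GL_n(F)|`.
-/

open LinearMap Submodule Module

section Ring

variable {R M N : Type*} [Ring R] [AddCommGroup M] [AddCommGroup N] [Module R M] [Module R N]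

noncomputable def surjectiveKerEqEquiv (W : Submodule R M) :
    {p : M →ₗ[R] N // Function.Surjective p ∧ ker p = W} ≃ ((M ⧸ W) ≃ₗ[R] N) where
  toFun p := (W.quotEquivOfEq _ p.2.2.symm).trans (p.1.quotKerEquivOfSurjective p.2.1)
  invFun e := ⟨e.toLinearMap ∘ₗ W.mkQ, e.surjective.comp W.mkQ_surjective, by
    rw [ker_comp, LinearEquiv.ker, comap_bot, ker_mkQ]⟩
  left_inv _ := rfl
  right_inv e := by
    ext x
    induction x using Submodule.Quotient.induction_on
    simp

def LinearEquiv.linearEquivCongrLeft {P : Type*} [AddCommGroup P] [Module R P]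
    (e : M ≃ₗ[R] N) : (M ≃ₗ[R] P) ≃ (N ≃ₗ[R] P) where
  toFun f := e.symm.trans f
  invFun f := e.trans f
  left_inv f := by ext; simp
  right_inv f := by ext; simp

end Ring

section CommRing

variable {R M : Type*} [CommRing R] [AddCommGroup M] [Module R M]

noncomputable def linearIndependentEquivInjective (ι : Type*) [Fintype ι] :
    {v : ι → M // LinearIndependent R v} ≃ {f : (ι → R) →ₗ[R] M // Function.Injective f} :=
  ((Pi.basisFun R ι).constr R).toEquiv.subtypeEquiv fun v => by
    have : (Pi.basisFun R ι).constr R v = Fintype.linearCombination R v := by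
      ext x; simp [Basis.constr_apply_fintype, Fintype.linearCombination_apply]
    simp [this, linearIndependent_iff_injective_fintypeLinearCombination]

end CommRing

theorem prod_range_pow_sub_pow_add (q k l : ℕ) :
    ∏ i ∈ Finset.range (k + l), (q ^ (k + l) - q ^ i) =
      (∏ i ∈ Finset.range l, (q ^ (k + l) - q ^ i)) *
        (q ^ (k * l) * ∏ i ∈ Finset.range k, (q ^ k - q ^ i)) := by
  have shift (i : ℕ) : q ^ (k + l) - q ^ (l + i) = q ^ l * (q ^ k - q ^ i) := by
    rw [Nat.mul_sub, ← pow_add, ← pow_add, add_comm k l]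
  rw [add_comm k l, Finset.prod_range_add, add_comm l k]
  simp only [shift, Finset.prod_mul_distrib, Finset.prod_const, Finset.card_range, ← pow_mul,
    mul_comm l k]

section Field

variable {K A M N : Type*} [Field K] [AddCommGroup A] [AddCommGroup M] [AddCommGroup N]
  [Module K A] [Module K M] [Module K N] [FiniteDimensional K M] [FiniteDimensional K N]

noncomputable def surjectiveKerEqEquivOfFinrankEq {W : Submodule K M}
    (h : finrank K (M ⧸ W) = finrank K N) :
    {p : M →ₗ[K] N // Function.Surjective p ∧ ker p = W} ≃ (N ≃ₗ[K] N) :=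
  (surjectiveKerEqEquiv W).trans (LinearEquiv.ofFinrankEq _ _ h).linearEquivCongrLeft

noncomputable def shortExactEquiv (h : finrank K M = finrank K A + finrank K N) :
    {ip : (A →ₗ[K] M) × (M →ₗ[K] N) //
        Function.Injective ip.1 ∧ Function.Surjective ip.2 ∧ ker ip.2 = range ip.1} ≃
      {i : A →ₗ[K] M // Function.Injective i} × (N ≃ₗ[K] N) :=
  let sigmaEquiv : {ip : (A →ₗ[K] M) × (M →ₗ[K] N) //
        Function.Injective ip.1 ∧ Function.Surjective ip.2 ∧ ker ip.2 = range ip.1} ≃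
      Σ i : {i : A →ₗ[K] M // Function.Injective i},
        {p : M →ₗ[K] N // Function.Surjective p ∧ ker p = range i.1} :=
    { toFun x := ⟨⟨x.1.1, x.2.1⟩, ⟨x.1.2, x.2.2⟩⟩
      invFun x := ⟨⟨x.1.1, x.2.1⟩, x.1.2, x.2.2⟩
      left_inv _ := rfl
      right_inv _ := rfl }
  have finrank_quotient_range (i : {i : A →ₗ[K] M // Function.Injective i}) :
      finrank K (M ⧸ range i.1) = finrank K N := by
    have := (range i.1).finrank_quotient_add_finrank
    rw [finrank_range_of_inj i.2] at this
    omega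
  sigmaEquiv.trans <| (Equiv.sigmaCongrRight fun i =>
    surjectiveKerEqEquivOfFinrankEq (finrank_quotient_range i)).trans (Equiv.sigmaEquivProd _ _)

end Field

theorem natCard_linearEquiv_fin_pi (K : Type*) [Field K] [Fintype K] (k : ℕ) :
    Nat.card ((Fin k → K) ≃ₗ[K] (Fin k → K)) =
      ∏ i : Fin k, (Fintype.card K ^ k - Fintype.card K ^ (i : ℕ)) := by
  rw [← Matrix.card_GL_field k]
  exact Nat.card_congr ((Matrix.GeneralLinearGroup.toLin.trans
    (LinearMap.GeneralLinearGroup.generalLinearEquiv K (Fin k → K))).toEquiv).symm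

/-- Over a finite field `F` with `q` elements, the number `N` of short exact
sequences `0 → F^l → F^{k+l} → F^k → 0` (with middle term the standard
`F^{k+l}`) satisfies `q^{k·l} · N = ∏_{i=0}^{k+l-1} (q^{k+l} − q^i) = |GL_{k+l}(F)|`;
equivalently, the groupoid cardinality of the groupoid of extensions of `F^k`
by `F^l` with middle term isomorphic to `F^{k+l}` equals `q^{−kl}`. -/
theorem ext_groupoid_cardinality (F : Type*) [Field F] [Fintype F] (q k l : ℕ)
    (hq : Fintype.card F = q) :
    q ^ (k * l) *
        Nat.card {ip : ((Fin l → F) →ₗ[F] (Fin (k + l) → F)) ×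
            ((Fin (k + l) → F) →ₗ[F] (Fin k → F)) //
          Function.Injective ip.1 ∧ Function.Surjective ip.2 ∧
            LinearMap.ker ip.2 = LinearMap.range ip.1}
      = ∏ i ∈ Finset.range (k + l), (q ^ (k + l) - q ^ i) := by
  subst hq
  have hdim : finrank F (Fin (k + l) → F) = finrank F (Fin l → F) + finrank F (Fin k → F) := by
    simp [add_comm]
  have hinj := card_linearIndependent (K := F) (V := Fin (k + l) → F) (k := l) (by simp)
  rw [Nat.card_congr (shortExactEquiv hdim), Nat.card_prod,
    ← Nat.card_congr (linearIndependentEquivInjective (Fin l)), hinj, natCard_linearEquiv_fin_pi,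
    Fin.prod_univ_eq_prod_range (fun i => _ ^ finrank F _ - _ ^ i),
    Fin.prod_univ_eq_prod_range (fun i => _ ^ k - _ ^ i), prod_range_pow_sub_pow_add]
  simp only [finrank_fin_fun]
  ring
end
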